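/- Let v ∈ ℝⁿ with κ_q(v) > 0 and minimizer ω_q(v), let P₀ ∈ Δⁿ be a probability vector, β ≥ 0, 1 < p < ∞ with conjugate q, and define u(s) := sign(v(s)-ω_q(v))|v(s)-ω_q(v)|^{q-1}/κ_q(v)^{q-1}. Then p* := -β·u is an optimal solution of min over p̂ ∈ ℝⁿ with ⟨p̂,𝟏⟩ = 0 and ‖p̂‖_p ≤ β of ⟨P₀ + p̂, v⟩, and the optimal value is ⟨P₀, v⟩ - β·κ_q(v). -/

import Mathlib

/-
Hölder's inequality gives `⟨p̂, v⟩ = ⟨p̂, v - ω𝟏⟩ ≥ -‖p̂‖_p κ ≥ -β κ` for every feasible `p̂`, the shift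
by `ω` being free because `⟨p̂, 𝟏⟩ = 0`. The vector `u` is the equality case of Hölder's inequality
for `v - ω𝟏`: `‖u‖_p = 1` and `⟨u, v - ω𝟏⟩ = κ`. Finally `⟨u, 𝟏⟩ = 0` is the first-order condition
for `ω` minimising `t ↦ ‖v - t𝟏‖_q ^ q`, so `-β u` is feasible and attains the bound.
-/

/-- The ℓ_p norm of a finite real vector, for a real exponent `p`. -/
noncomputable def pnorm {n : ℕ} (p : ℝ) (v : Fin n → ℝ) : ℝ :=
  (∑ i, |v i| ^ p) ^ (1 / p)

open Finset

namespace Real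

lemma sign_mul_self_eq_abs (x : ℝ) : sign x * x = |x| := by
  rcases lt_trichotomy x 0 with hx | rfl | hx
  · rw [sign_of_neg hx, abs_of_neg hx, neg_one_mul]
  · simp
  · rw [sign_of_pos hx, abs_of_pos hx, one_mul]

lemma sign_mul_abs (x : ℝ) : sign x * |x| = x := by
  rcases lt_trichotomy x 0 with hx | rfl | hx
  · rw [sign_of_neg hx, abs_of_neg hx, neg_one_mul, neg_neg]
  · simp
  · rw [sign_of_pos hx, abs_of_pos hx, one_mul]

lemma abs_sign_mul_abs_rpow (x : ℝ) {r : ℝ} (hr : 0 < r) : |sign x * |x| ^ r| = |x| ^ r := by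
  rcases eq_or_ne x 0 with rfl | hx
  · simp [zero_rpow hr.ne']
  · rcases sign_apply_eq_of_ne_zero x hx with h | h <;>
      simp [h, abs_of_nonneg (rpow_nonneg (abs_nonneg x) r)]

lemma sign_mul_abs_rpow_mul_self (x : ℝ) {r : ℝ} (hr : 0 < r) :
    sign x * |x| ^ r * x = |x| ^ (r + 1) := by
  rw [rpow_add_one' (abs_nonneg x) (by linarith), mul_right_comm, sign_mul_self_eq_abs, mul_comm]

lemma sign_mul_abs_rpow_sub_one (x : ℝ) {q : ℝ} (hq : 1 < q) :
    sign x * |x| ^ (q - 1) = |x| ^ (q - 2) * x := by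
  rcases eq_or_ne x 0 with rfl | hx
  · simp [zero_rpow (by linarith : q - 1 ≠ 0)]
  · rw [show q - 1 = q - 2 + 1 by ring, rpow_add_one (abs_ne_zero.mpr hx), mul_left_comm,
      sign_mul_abs]

end Real

lemma sum_sign_mul_abs_rpow_eq_zero_of_isMin {ι : Type*} [Fintype ι] {q : ℝ} (hq : 1 < q)
    (v : ι → ℝ) {ω : ℝ} (hω : ∀ t, ∑ i, |v i - ω| ^ q ≤ ∑ i, |v i - t| ^ q) :
    ∑ i, Real.sign (v i - ω) * |v i - ω| ^ (q - 1) = 0 := by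
  have hderiv : HasDerivAt (fun t => ∑ i, |v i - t| ^ q)
      (∑ i, q * |v i - ω| ^ (q - 2) * (v i - ω) * (-1)) ω :=
    HasDerivAt.fun_sum fun i _ =>
      (hasDerivAt_abs_rpow (v i - ω) hq).comp ω ((hasDerivAt_id ω).const_sub (v i))
  have hzero := IsLocalMin.hasDerivAt_eq_zero (Filter.Eventually.of_forall hω) hderiv
  have hsum : -q * ∑ i, |v i - ω| ^ (q - 2) * (v i - ω) = 0 := by
    rw [← hzero, mul_sum]; exact sum_congr rfl fun i _ => by ring
  simp_rw [Real.sign_mul_abs_rpow_sub_one _ hq]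
  exact (mul_eq_zero.mp hsum).resolve_left (by linarith)

lemma sum_abs_rpow_nonneg {ι : Type*} [Fintype ι] (p : ℝ) (x : ι → ℝ) : 0 ≤ ∑ i, |x i| ^ p :=
  sum_nonneg fun _ _ => Real.rpow_nonneg (abs_nonneg _) _

lemma sum_mul_sub_const_of_sum_eq_zero {ι : Type*} [Fintype ι] {x : ι → ℝ} (hx : ∑ i, x i = 0)
    (v : ι → ℝ) (c : ℝ) : ∑ i, x i * (v i - c) = ∑ i, x i * v i := by
  simp [mul_sub, sum_sub_distrib, ← sum_mul, hx]

section pnorm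

variable {n : ℕ} {p q : ℝ}

lemma pnorm_nonneg (x : Fin n → ℝ) : 0 ≤ pnorm p x :=
  Real.rpow_nonneg (sum_abs_rpow_nonneg _ _) _

lemma pnorm_rpow (hp : 0 < p) (x : Fin n → ℝ) : pnorm p x ^ p = ∑ i, |x i| ^ p := by
  rw [pnorm, ← Real.rpow_mul (sum_abs_rpow_nonneg _ _),
    one_div_mul_cancel hp.ne', Real.rpow_one]

lemma pnorm_const_mul (hp : 0 < p) (c : ℝ) (x : Fin n → ℝ) :
    pnorm p (fun i => c * x i) = |c| * pnorm p x := by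
  simp only [pnorm, abs_mul, Real.mul_rpow (abs_nonneg c) (abs_nonneg _), ← mul_sum]
  rw [Real.mul_rpow (Real.rpow_nonneg (abs_nonneg c) _) (sum_abs_rpow_nonneg _ _),
    ← Real.rpow_mul (abs_nonneg c), mul_one_div_cancel hp.ne', Real.rpow_one]

lemma neg_pnorm_mul_pnorm_le_sum_mul (hpq : p.HolderConjugate q) (x y : Fin n → ℝ) :
    -(pnorm p x * pnorm q y) ≤ ∑ i, x i * y i := by
  have := Real.inner_le_Lp_mul_Lq univ (fun i => -x i) y hpq
  simp only [abs_neg, neg_mul, sum_neg_distrib] at this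
  exact neg_le.mp this

end pnorm

/-- The vector attaining equality in Hölder's inequality against `w`. -/
noncomputable def holderDual {n : ℕ} (q : ℝ) (w : Fin n → ℝ) : Fin n → ℝ :=
  fun i => Real.sign (w i) * |w i| ^ (q - 1) / pnorm q w ^ (q - 1)

section holderDual

variable {n : ℕ} {p q : ℝ} {w : Fin n → ℝ}

lemma pnorm_holderDual (hpq : p.HolderConjugate q) (hw : 0 < pnorm q w) :
    pnorm p (holderDual q w) = 1 := by
  have hκ : 0 < pnorm q w ^ (q - 1) := Real.rpow_pos_of_pos hw _
  have habs : ∀ i, |holderDual q w i| ^ p = |w i| ^ q / pnorm q w ^ q := fun i => by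
    rw [holderDual, abs_div, abs_of_pos hκ, Real.abs_sign_mul_abs_rpow _ hpq.symm.sub_one_pos,
      Real.div_rpow (Real.rpow_nonneg (abs_nonneg _) _) hκ.le, ← Real.rpow_mul (abs_nonneg _),
      ← Real.rpow_mul hw.le, hpq.symm.sub_one_mul_conj]
  rw [pnorm, sum_congr rfl fun i _ => habs i, ← sum_div, ← pnorm_rpow hpq.symm.pos,
    div_self (Real.rpow_pos_of_pos hw q).ne', Real.one_rpow]

lemma sum_holderDual_mul_self (hq : 1 < q) (hw : 0 < pnorm q w) :
    ∑ i, holderDual q w i * w i = pnorm q w := by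
  simp only [holderDual, div_mul_eq_mul_div,
    Real.sign_mul_abs_rpow_mul_self _ (sub_pos.mpr hq), sub_add_cancel]
  rw [← sum_div, ← pnorm_rpow (by linarith), ← Real.rpow_sub hw, sub_sub_cancel, Real.rpow_one]

lemma sum_holderDual_sub_eq_zero_of_isMin (hq : 1 < q) (v : Fin n → ℝ) {ω : ℝ}
    (hω : ∀ t, pnorm q (fun i => v i - ω) ≤ pnorm q fun i => v i - t) :
    ∑ i, holderDual q (fun i => v i - ω) i = 0 := by
  have hmin : ∀ t, ∑ i, |v i - ω| ^ q ≤ ∑ i, |v i - t| ^ q := fun t => by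
    simpa only [pnorm_rpow (by linarith : 0 < q)] using
      Real.rpow_le_rpow (pnorm_nonneg _) (hω t) (by linarith : 0 ≤ q)
  simp only [holderDual, ← sum_div, sum_sign_mul_abs_rpow_eq_zero_of_isMin hq v hmin, zero_div]

end holderDual

theorem stmt16_general {n : ℕ} (v : Fin n → ℝ) (p q : ℝ) (hp : 1 < p) (hpq : 1 / p + 1 / q = 1)
    (ω : ℝ) (hω : ∀ w : ℝ, pnorm q (fun i => v i - ω) ≤ pnorm q fun i => v i - w)
    (hκ : 0 < pnorm q fun i => v i - ω)
    (P0 : Fin n → ℝ)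
    (β : ℝ) (hβ : 0 ≤ β) :
    let κ : ℝ := pnorm q fun i => v i - ω
    let u : Fin n → ℝ := fun i => Real.sign (v i - ω) * |v i - ω| ^ (q - 1) / κ ^ (q - 1)
    let ps : Fin n → ℝ := fun i => -β * u i
    (∑ i, ps i) = 0 ∧ pnorm p ps ≤ β ∧
    (∑ i, (P0 i + ps i) * v i) = (∑ i, P0 i * v i) - β * κ ∧
    ∀ ph : Fin n → ℝ, (∑ i, ph i) = 0 → pnorm p ph ≤ β →
      (∑ i, P0 i * v i) - β * κ ≤ ∑ i, (P0 i + ph i) * v i := by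
  intro κ u ps
  have hpq : p.HolderConjugate q :=
    Real.holderConjugate_iff.mpr ⟨hp, by simpa only [one_div] using hpq⟩
  have hu : ∑ i, u i = 0 := sum_holderDual_sub_eq_zero_of_isMin hpq.symm.lt v hω
  have huv : ∑ i, u i * v i = κ := by
    rw [← sum_mul_sub_const_of_sum_eq_zero hu v ω]
    exact sum_holderDual_mul_self hpq.symm.lt hκ
  have hsplit : ∀ x : Fin n → ℝ, ∑ i, (P0 i + x i) * v i = ∑ i, P0 i * v i + ∑ i, x i * v i :=
    fun x => by simp only [add_mul, sum_add_distrib]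
  refine ⟨?_, ?_, ?_, fun ph hph hnorm => ?_⟩
  · rw [← mul_sum, hu, mul_zero]
  · rw [pnorm_const_mul hpq.pos, show pnorm p u = 1 from pnorm_holderDual hpq hκ, abs_neg,
      abs_of_nonneg hβ, mul_one]
  · simp only [hsplit, ps, mul_assoc, ← mul_sum, huv]
    ring
  · have holder := neg_pnorm_mul_pnorm_le_sum_mul hpq ph fun i => v i - ω
    rw [sum_mul_sub_const_of_sum_eq_zero hph] at holder
    rw [hsplit]
    linarith [mul_le_mul_of_nonneg_right hnorm hκ.le]

theorem stmt16 {n : ℕ} (v : Fin n → ℝ) (p q : ℝ) (hp : 1 < p) (hpq : 1 / p + 1 / q = 1)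
    (ω : ℝ) (hω : ∀ w : ℝ, pnorm q (fun i => v i - ω) ≤ pnorm q fun i => v i - w)
    (hκ : 0 < pnorm q fun i => v i - ω)
    (P0 : Fin n → ℝ) (hP0 : ∀ i, 0 ≤ P0 i) (hPs : ∑ i, P0 i = 1)
    (β : ℝ) (hβ : 0 ≤ β) :
    let κ : ℝ := pnorm q fun i => v i - ω
    let u : Fin n → ℝ := fun i => Real.sign (v i - ω) * |v i - ω| ^ (q - 1) / κ ^ (q - 1)
    let ps : Fin n → ℝ := fun i => -β * u i
    (∑ i, ps i) = 0 ∧ pnorm p ps ≤ β ∧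
    (∑ i, (P0 i + ps i) * v i) = (∑ i, P0 i * v i) - β * κ ∧
    ∀ ph : Fin n → ℝ, (∑ i, ph i) = 0 → pnorm p ph ≤ β →
      (∑ i, P0 i * v i) - β * κ ≤ ∑ i, (P0 i + ph i) * v i :=
  stmt16_general v p q hp hpq ω hω hκ P0 β hβ
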